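/- arXiv:0906.2448 — 3 statements merged into one kernel-verified Lean document; each statement's English description precedes it below -/
import Mathlib

section
/- Let p : [0,1] → ℝ≥0 be a unimodal function (i.e., there exists t_max such that p is nondecreasing on [0,t_max] and nonincreasing on [t_max,1]) and let 0 ≤ α < β ≤ 1. Then ∫_α^β p(t) dt ≥ (β - α) · min{∫_0^α p(t) dt, ∫_β^1 p(t) dt}. -/
/-!
On `[α, β]` the function stays above `min (∫₀^α p) (∫_β^1 p)`: a point `t` left of the mode
dominates `p` on `[0, α]`, so `∫₀^α p ≤ α p(t) ≤ p(t)`; a point right of the mode dominates `p`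
on `[β, 1]`, so `∫_β^1 p ≤ (1 - β) p(t) ≤ p(t)`. Integrating this pointwise bound over `[α, β]`
gives the claim.
-/

open MeasureTheory Set

namespace intervalIntegral

variable {f : ℝ → ℝ} {a b c : ℝ}

theorem mul_le_integral_of_forall_le (hab : a ≤ b) (hf : IntervalIntegrable f volume a b)
    (h : ∀ t ∈ Icc a b, c ≤ f t) : (b - a) * c ≤ ∫ t in a..b, f t := by
  simpa using integral_mono_on hab intervalIntegrable_const hf h

theorem integral_le_mul_of_forall_le (hab : a ≤ b) (hf : IntervalIntegrable f volume a b)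
    (h : ∀ t ∈ Icc a b, f t ≤ c) : ∫ t in a..b, f t ≤ (b - a) * c := by
  simpa using integral_mono_on hab hf intervalIntegrable_const h

theorem integral_le_of_forall_le_of_sub_le_one (hab : a ≤ b) (hba : b - a ≤ 1) (hc : 0 ≤ c)
    (hf : IntervalIntegrable f volume a b) (h : ∀ t ∈ Icc a b, f t ≤ c) :
    ∫ t in a..b, f t ≤ c :=
  (integral_le_mul_of_forall_le hab hf h).trans (mul_le_of_le_one_left hc hba)

end intervalIntegral

open intervalIntegral

theorem unimodal_interval_isoperimetry
    (p : ℝ → ℝ) (hnn : ∀ t ∈ Icc (0:ℝ) 1, 0 ≤ p t)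
    (hint : IntervalIntegrable p volume 0 1)
    (huni : ∃ tmax ∈ Icc (0:ℝ) 1,
      MonotoneOn p (Icc 0 tmax) ∧ AntitoneOn p (Icc tmax 1))
    (α β : ℝ) (hα : 0 ≤ α) (hαβ : α < β) (hβ : β ≤ 1) :
    (β - α) * min (∫ t in (0:ℝ)..α, p t) (∫ t in β..(1:ℝ), p t) ≤
      ∫ t in α..β, p t := by
  obtain ⟨tmax, -, hmono, hanti⟩ := huni
  have hsub : ∀ a ∈ Icc (0:ℝ) 1, ∀ b ∈ Icc (0:ℝ) 1, IntervalIntegrable p volume a b :=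
    fun a ha b hb => hint.mono_set <| uIcc_subset_uIcc (by rwa [uIcc_of_le zero_le_one])
      (by rwa [uIcc_of_le zero_le_one])
  refine mul_le_integral_of_forall_le hαβ.le (hsub α ⟨hα, by linarith⟩ β ⟨by linarith, hβ⟩)
    fun t ⟨hαt, htβ⟩ => ?_
  have hpt : 0 ≤ p t := hnn t ⟨by linarith, by linarith⟩
  rcases le_total t tmax with htm | htm
  · refine (min_le_left _ _).trans <| integral_le_of_forall_le_of_sub_le_one hα (by linarith) hpt
      (hsub 0 ⟨le_rfl, zero_le_one⟩ α ⟨hα, by linarith⟩) fun s hs => ?_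
    exact hmono ⟨hs.1, by linarith [hs.2]⟩ ⟨by linarith, htm⟩ (by linarith [hs.2])
  · refine (min_le_right _ _).trans <| integral_le_of_forall_le_of_sub_le_one hβ (by linarith) hpt
      (hsub β ⟨by linarith, hβ⟩ 1 ⟨zero_le_one, le_rfl⟩) fun s hs => ?_
    exact hanti ⟨htm, by linarith⟩ ⟨by linarith [hs.1], hs.2⟩ (by linarith [hs.1])
end

section
/- For the n-dimensional standard Cauchy distribution with density proportional to (1+‖x‖²)^{-(n+1)/2}, and any t > 0, the probability that ‖x‖ ≥ t is at most 2√(2n)/t. In particular, P(‖x‖ ≥ 2√(2n)/ε) ≤ ε for all ε > 0. -/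
/-! In polar coordinates both integrals become integrals over `r > 0` of
`r ^ (n - 1) * (1 + r²) ^ (-(n + 1) / 2) = r⁻² * (1 + r⁻²) ^ (-(n + 1) / 2)`. The second factor is
at most `1`, so the tail beyond `t` is at most `∫_t^∞ r⁻² = 1 / t`. For `r ≥ √n` it is at least
`exp (-(n + 1) / (2 r²)) ≥ e⁻¹`, so the whole integral is at least `1 / (e √n) ≥ 1 / (2 √(2n))`. -/

open MeasureTheory Set Metric Module Real

lemma setIntegral_le_norm_div_integral_fun_norm_addHaar {E : Type*} [NormedAddCommGroup E]
    [NormedSpace ℝ E] [MeasurableSpace E] [BorelSpace E] [FiniteDimensional ℝ E] [Nontrivial E]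
    (μ : Measure E) [μ.IsAddHaarMeasure] (f : ℝ → ℝ) {t : ℝ} (ht : 0 < t) :
    (∫ x in {x | t ≤ ‖x‖}, f ‖x‖ ∂μ) / ∫ x, f ‖x‖ ∂μ =
      (∫ r in Ioi t, r ^ (finrank ℝ E - 1) * f r) / ∫ r in Ioi 0, r ^ (finrank ℝ E - 1) * f r := by
  have h_indicator : {x : E | t ≤ ‖x‖}.indicator (fun x => f ‖x‖) =
      fun x => (Ici t).indicator f ‖x‖ := by
    ext x; by_cases hx : t ≤ ‖x‖ <;> simp [hx]
  have h_tail : ∫ r in Ioi 0, r ^ (finrank ℝ E - 1) • (Ici t).indicator f r =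
      ∫ r in Ioi t, r ^ (finrank ℝ E - 1) * f r := by
    simp_rw [smul_eq_mul, ← indicator_mul_right _ (fun r => r ^ (finrank ℝ E - 1)),
      integral_indicator measurableSet_Ici, Measure.restrict_restrict measurableSet_Ici,
      inter_eq_self_of_subset_left (Ici_subset_Ioi.mpr ht), integral_Ici_eq_integral_Ioi]
  have h_const : (finrank ℝ E : ℝ) * μ.real (ball 0 1) ≠ 0 :=
    mul_ne_zero (by exact_mod_cast finrank_pos.ne')
      (ENNReal.toReal_pos (measure_ball_pos μ 0 one_pos).ne' measure_ball_lt_top.ne).ne'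
  rw [← integral_indicator (measurableSet_le measurable_const measurable_norm), h_indicator,
    integral_fun_norm_addHaar, integral_fun_norm_addHaar, h_tail]
  simp only [nsmul_eq_mul, smul_eq_mul, ← mul_assoc]
  exact mul_div_mul_left _ _ h_const

noncomputable def cauchyRadial (n : ℕ) (r : ℝ) : ℝ :=
  r ^ (n - 1) * (1 + r ^ 2) ^ (-((n : ℝ) + 1) / 2)

section
variable {n : ℕ} {r : ℝ}

lemma cauchyRadial_eq (hn : 1 ≤ n) (hr : 0 < r) :
    cauchyRadial n r = r ^ (-2 : ℝ) * (1 + (r ^ 2)⁻¹) ^ (-((n : ℝ) + 1) / 2) := by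
  have hr2 : 0 < r ^ 2 := by positivity
  have h_pow : r ^ (n - 1) = r ^ (-2 : ℝ) * (r ^ 2) ^ (((n : ℝ) + 1) / 2) := by
    rw [← rpow_natCast, ← rpow_natCast r 2, ← rpow_mul hr.le, ← rpow_add hr, Nat.cast_sub hn]
    push_cast; ring_nf
  have h_base : 1 + (r ^ 2)⁻¹ = (r ^ 2)⁻¹ * (1 + r ^ 2) := by field_simp; ring
  rw [cauchyRadial, h_pow, h_base, mul_rpow (by positivity) (by positivity), inv_rpow hr2.le,
    ← rpow_neg hr2.le, neg_div, neg_neg, mul_assoc]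

lemma cauchyRadial_le_rpow_neg_two (hn : 1 ≤ n) (hr : 0 < r) :
    cauchyRadial n r ≤ r ^ (-2 : ℝ) := by
  rw [cauchyRadial_eq hn hr]
  refine mul_le_of_le_one_right (by positivity) (rpow_le_one_of_one_le_of_nonpos ?_ ?_)
  · have : 0 ≤ (r ^ 2)⁻¹ := by positivity
    linarith
  · have : (0 : ℝ) ≤ n := n.cast_nonneg
    linarith

lemma exp_neg_one_mul_rpow_neg_two_le_cauchyRadial (hn : 1 ≤ n) (hr : √n ≤ r) :
    exp (-1) * r ^ (-2 : ℝ) ≤ cauchyRadial n r := by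
  have hn' : (1 : ℝ) ≤ n := by exact_mod_cast hn
  have hr0 : 0 < r := (sqrt_pos.mpr (by linarith)).trans_le hr
  have hnr : (n : ℝ) ≤ r ^ 2 := (sqrt_le_iff.mp hr).2
  rw [cauchyRadial_eq hn hr0, mul_comm]
  gcongr
  calc exp (-1) ≤ exp (-(((n : ℝ) + 1) / 2 * (r ^ 2)⁻¹)) := by
        rw [exp_le_exp, neg_le_neg_iff, ← div_eq_mul_inv, div_le_one (by positivity)]
        linarith
    _ = (exp (r ^ 2)⁻¹) ^ (-((n : ℝ) + 1) / 2) := by rw [← exp_mul]; ring_nf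
    _ ≤ (1 + (r ^ 2)⁻¹) ^ (-((n : ℝ) + 1) / 2) :=
        rpow_le_rpow_of_nonpos (by positivity) (by linarith [add_one_le_exp (r ^ 2)⁻¹])
          (by linarith)

lemma continuous_cauchyRadial (n : ℕ) : Continuous (cauchyRadial n) :=
  (continuous_pow _).mul <| (continuous_const.add (continuous_pow 2)).rpow_const
    fun r => Or.inl (by positivity : (0 : ℝ) < 1 + r ^ 2).ne'

lemma cauchyRadial_nonneg (n : ℕ) (hr : 0 ≤ r) : 0 ≤ cauchyRadial n r :=
  mul_nonneg (pow_nonneg hr _) (rpow_nonneg (by positivity) _)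

lemma integrableOn_Ioi_cauchyRadial (hn : 1 ≤ n) : IntegrableOn (cauchyRadial n) (Ioi 0) := by
  have h_near : IntegrableOn (cauchyRadial n) (Ioc 0 1) :=
    (continuous_cauchyRadial n).integrableOn_Icc.mono_set Ioc_subset_Icc_self
  have h_far : IntegrableOn (cauchyRadial n) (Ioi 1) := by
    refine (integrableOn_Ioi_rpow_of_lt (by norm_num : (-2 : ℝ) < -1) one_pos).mono'
      (continuous_cauchyRadial n).aestronglyMeasurable.restrict ?_
    filter_upwards [ae_restrict_mem measurableSet_Ioi] with r hr
    have hr0 : 0 < r := one_pos.trans hr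
    rw [norm_of_nonneg (cauchyRadial_nonneg n hr0.le)]
    exact cauchyRadial_le_rpow_neg_two hn hr0
  simpa [Ioc_union_Ioi_eq_Ioi zero_le_one] using h_near.union h_far

lemma integral_Ioi_cauchyRadial_le (hn : 1 ≤ n) {t : ℝ} (ht : 0 < t) :
    ∫ r in Ioi t, cauchyRadial n r ≤ t⁻¹ := by
  calc ∫ r in Ioi t, cauchyRadial n r ≤ ∫ r in Ioi t, r ^ (-2 : ℝ) :=
        setIntegral_mono_on ((integrableOn_Ioi_cauchyRadial hn).mono_set (Ioi_subset_Ioi ht.le))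
          (integrableOn_Ioi_rpow_of_lt (by norm_num) ht) measurableSet_Ioi
          fun r hr => cauchyRadial_le_rpow_neg_two hn (ht.trans hr)
    _ = t⁻¹ := by
        rw [integral_Ioi_rpow_of_lt (by norm_num) ht]
        norm_num [rpow_neg_one]

lemma inv_exp_one_mul_sqrt_le_integral_cauchyRadial (hn : 1 ≤ n) :
    (exp 1 * √n)⁻¹ ≤ ∫ r in Ioi 0, cauchyRadial n r := by
  have hs : 0 < √n := sqrt_pos.mpr (by exact_mod_cast hn)
  calc (exp 1 * √n)⁻¹ = ∫ r in Ioi √n, exp (-1) * r ^ (-2 : ℝ) := by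
        rw [integral_const_mul, integral_Ioi_rpow_of_lt (by norm_num) hs, exp_neg]
        norm_num [rpow_neg_one]
        ring
    _ ≤ ∫ r in Ioi √n, cauchyRadial n r :=
        setIntegral_mono_on ((integrableOn_Ioi_rpow_of_lt (by norm_num) hs).const_mul _)
          ((integrableOn_Ioi_cauchyRadial hn).mono_set (Ioi_subset_Ioi hs.le)) measurableSet_Ioi
          fun r hr => exp_neg_one_mul_rpow_neg_two_le_cauchyRadial hn (le_of_lt hr)
    _ ≤ ∫ r in Ioi 0, cauchyRadial n r :=
        setIntegral_mono_set (integrableOn_Ioi_cauchyRadial hn)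
          ((ae_restrict_mem measurableSet_Ioi).mono fun r hr => cauchyRadial_nonneg n (le_of_lt hr))
          (Ioi_subset_Ioi hs.le).eventuallyLE

lemma exp_one_le_two_mul_sqrt_two : exp 1 ≤ 2 * √2 := by
  nlinarith [exp_one_lt_d9, sq_sqrt (show (0 : ℝ) ≤ 2 by norm_num), sqrt_nonneg 2,
    sq_nonneg (√2 - 1.41)]

lemma integral_Ioi_cauchyRadial_div_le (hn : 1 ≤ n) {t : ℝ} (ht : 0 < t) :
    (∫ r in Ioi t, cauchyRadial n r) / ∫ r in Ioi 0, cauchyRadial n r ≤ 2 * √(2 * n) / t := by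
  have h_denom : (2 * √(2 * n))⁻¹ ≤ ∫ r in Ioi 0, cauchyRadial n r := by
    refine le_trans ?_ (inv_exp_one_mul_sqrt_le_integral_cauchyRadial hn)
    rw [sqrt_mul zero_le_two, ← mul_assoc]
    have : 0 < √n := sqrt_pos.mpr (by exact_mod_cast hn)
    gcongr
    exact exp_one_le_two_mul_sqrt_two
  calc (∫ r in Ioi t, cauchyRadial n r) / ∫ r in Ioi 0, cauchyRadial n r
      ≤ t⁻¹ / (2 * √(2 * n))⁻¹ :=
        div_le_div₀ (by positivity) (integral_Ioi_cauchyRadial_le hn ht)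
          (by have : 0 < √(2 * n) := sqrt_pos.mpr (by positivity); positivity) h_denom
    _ = 2 * √(2 * n) / t := by rw [div_inv_eq_mul, inv_mul_eq_div]

end

theorem cauchy_large_ball_probability (n : ℕ) (hn : 1 ≤ n) (t : ℝ) (ht : 0 < t) :
    (∫ x in {x : EuclideanSpace ℝ (Fin n) | t ≤ ‖x‖},
        (1 + ‖x‖ ^ 2) ^ (-((n:ℝ) + 1) / 2)) /
      (∫ x : EuclideanSpace ℝ (Fin n), (1 + ‖x‖ ^ 2) ^ (-((n:ℝ) + 1) / 2)) ≤
      2 * Real.sqrt (2 * n) / t ∧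
    ∀ ε : ℝ, 0 < ε →
      (∫ x in {x : EuclideanSpace ℝ (Fin n) | 2 * Real.sqrt (2 * n) / ε ≤ ‖x‖},
          (1 + ‖x‖ ^ 2) ^ (-((n:ℝ) + 1) / 2)) /
        (∫ x : EuclideanSpace ℝ (Fin n), (1 + ‖x‖ ^ 2) ^ (-((n:ℝ) + 1) / 2)) ≤ ε := by
  have : Nontrivial (EuclideanSpace ℝ (Fin n)) :=
    Module.nontrivial_of_finrank_pos (R := ℝ) (by rwa [finrank_euclideanSpace_fin])
  have h_tail : ∀ s > 0,
      (∫ x in {x : EuclideanSpace ℝ (Fin n) | s ≤ ‖x‖}, (1 + ‖x‖ ^ 2) ^ (-((n:ℝ) + 1) / 2)) /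
        (∫ x : EuclideanSpace ℝ (Fin n), (1 + ‖x‖ ^ 2) ^ (-((n:ℝ) + 1) / 2)) ≤
        2 * √(2 * n) / s := fun s hs => by
    rw [setIntegral_le_norm_div_integral_fun_norm_addHaar volume (fun r => (1 + r ^ 2) ^ _) hs,
      finrank_euclideanSpace_fin]
    exact integral_Ioi_cauchyRadial_div_le hn hs
  refine ⟨h_tail t ht, fun ε hε => ?_⟩
  have h_sqrt_pos : 0 < 2 * √(2 * n) := by
    have : 0 < √(2 * n) := sqrt_pos.mpr (by positivity)
    positivity
  simpa only [div_div_cancel₀ h_sqrt_pos.ne'] using h_tail (2 * √(2 * n) / ε) (by positivity)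
end

section
/- Let f(x) = c(1+‖x‖²)^{-(n+1)/2} be the n-dimensional Cauchy density (c > 0 a constant). Let x ∈ ℝⁿ, r > 0, and let y ∈ ℝⁿ satisfy ‖x−y‖ ≤ r and |x·(x−y)| ≤ 4r‖x‖/√n. Then f(x)/f(y) ≥ 1 − 4r√n, provided r ≤ 1/√n. -/
open scoped RealInnerProductSpace

/-!
Writing `p = (n+1)/2`, the ratio `f x / f y` equals `((1 + ‖y‖²) / (1 + ‖x‖²)) ^ p`.
Expanding `‖y‖² = ‖x‖² - 2⟪x, x - y⟫ + ‖x - y‖²` and using `2‖x‖ ≤ 1 + ‖x‖²` turns the bound on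
`⟪x, x - y⟫` into `(1 + ‖y‖²) / (1 + ‖x‖²) ≥ 1 - s` with `s = 4r/√n`; Bernoulli's inequality then
gives `f x / f y ≥ 1 - p s ≥ 1 - 4r√n`.
-/

lemma sq_norm_sub_two_mul_le_sq_norm {E : Type*} [NormedAddCommGroup E] [InnerProductSpace ℝ E]
    {x y : E} {s : ℝ} (h : ⟪x, x - y⟫ ≤ s * ‖x‖) :
    ‖x‖ ^ 2 - 2 * s * ‖x‖ ≤ ‖y‖ ^ 2 := by
  have hexpand : ‖y‖ ^ 2 = ‖x‖ ^ 2 - 2 * ⟪x, x - y⟫ + ‖x - y‖ ^ 2 := by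
    simpa only [sub_sub_cancel] using norm_sub_sq_real x (x - y)
  nlinarith [sq_nonneg ‖x - y‖]

lemma one_sub_mul_one_add_sq_le {a b s : ℝ} (hs : 0 ≤ s) (h : a ^ 2 - 2 * s * a ≤ b ^ 2) :
    (1 - s) * (1 + a ^ 2) ≤ 1 + b ^ 2 := by
  nlinarith [mul_nonneg hs (sq_nonneg (a - 1))]

lemma one_sub_mul_le_rpow {p s t : ℝ} (hp : 1 ≤ p) (hs : 0 ≤ s) (ht : 0 ≤ t) (hst : 1 - s ≤ t) :
    1 - p * s ≤ t ^ p := by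
  rcases le_or_gt s 1 with hs1 | hs1
  · calc 1 - p * s ≤ (1 - s) ^ p := by
          simpa [sub_eq_add_neg] using one_add_mul_self_le_rpow_one_add (s := -s) (by linarith) hp
      _ ≤ t ^ p := Real.rpow_le_rpow (by linarith) hst (by linarith)
  · nlinarith [Real.rpow_nonneg ht p]

lemma mul_rpow_neg_div_mul_rpow_neg {c u v : ℝ} (hc : c ≠ 0) (hu : 0 < u) (hv : 0 < v) (p : ℝ) :
    c * u ^ (-p) / (c * v ^ (-p)) = (v / u) ^ p := by
  rw [Real.div_rpow hv.le hu.le, Real.rpow_neg hu.le, Real.rpow_neg hv.le]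
  field_simp

lemma half_succ_mul_div_sqrt_le {n : ℕ} (hn : 1 ≤ n) {r : ℝ} (hr : 0 ≤ r) :
    ((n : ℝ) + 1) / 2 * (4 * r / Real.sqrt n) ≤ 4 * r * Real.sqrt n := by
  have hn' : (1 : ℝ) ≤ n := by exact_mod_cast hn
  have hsqrt : 0 < Real.sqrt n := Real.sqrt_pos.mpr (by linarith)
  rw [← sub_nonneg]
  have key : 4 * r * Real.sqrt n - ((n : ℝ) + 1) / 2 * (4 * r / Real.sqrt n)
      = 2 * r * (n - 1) / Real.sqrt n := by
    field_simp
    rw [Real.sq_sqrt (by linarith)]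
    ring
  rw [key]
  have : 0 ≤ (n : ℝ) - 1 := by linarith
  positivity

theorem cauchy_smoothness_general (n : ℕ) (hn : 1 ≤ n) (c : ℝ) (hc : 0 < c)
    (f : EuclideanSpace ℝ (Fin n) → ℝ)
    (hf : ∀ x, f x = c * (1 + ‖x‖ ^ 2) ^ (-((n:ℝ) + 1) / 2))
    (r : ℝ) (hr : 0 < r)
    (x y : EuclideanSpace ℝ (Fin n))
    (hdot : |⟪x, x - y⟫| ≤ 4 * r * ‖x‖ / Real.sqrt n) :
    1 - 4 * r * Real.sqrt n ≤ f x / f y := by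
  set p : ℝ := ((n : ℝ) + 1) / 2
  set s : ℝ := 4 * r / Real.sqrt n
  have hs : 0 ≤ s := by positivity
  have hp : 1 ≤ p := by
    have : (1 : ℝ) ≤ n := by exact_mod_cast hn
    simp only [p]
    linarith
  have hratio : f x / f y = ((1 + ‖y‖ ^ 2) / (1 + ‖x‖ ^ 2)) ^ p := by
    rw [hf, hf, neg_div]
    exact mul_rpow_neg_div_mul_rpow_neg hc.ne' (by positivity) (by positivity) p
  have hinner : ⟪x, x - y⟫ ≤ s * ‖x‖ :=
    (le_abs_self _).trans (hdot.trans_eq (by ring))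
  have hquot : 1 - s ≤ (1 + ‖y‖ ^ 2) / (1 + ‖x‖ ^ 2) := by
    rw [le_div_iff₀ (by positivity)]
    exact one_sub_mul_one_add_sq_le hs (sq_norm_sub_two_mul_le_sq_norm hinner)
  rw [hratio]
  calc 1 - 4 * r * Real.sqrt n ≤ 1 - p * s := sub_le_sub_left (half_succ_mul_div_sqrt_le hn hr.le) 1
    _ ≤ _ := one_sub_mul_le_rpow hp hs (by positivity) hquot

theorem cauchy_smoothness (n : ℕ) (hn : 1 ≤ n) (c : ℝ) (hc : 0 < c)
    (f : EuclideanSpace ℝ (Fin n) → ℝ)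
    (hf : ∀ x, f x = c * (1 + ‖x‖ ^ 2) ^ (-((n:ℝ) + 1) / 2))
    (r : ℝ) (hr : 0 < r) (hrn : r ≤ 1 / Real.sqrt n)
    (x y : EuclideanSpace ℝ (Fin n)) (hxy : ‖x - y‖ ≤ r)
    (hdot : |⟪x, x - y⟫| ≤ 4 * r * ‖x‖ / Real.sqrt n) :
    1 - 4 * r * Real.sqrt n ≤ f x / f y :=
  cauchy_smoothness_general n hn c hc f hf r hr x y hdot
end
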